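/- arXiv:0902.1592 — 2 statements merged into one kernel-verified Lean document; each statement's English description precedes it below -/
import Mathlib

section
/- The positive part W_+ of W(2,2) is generated as a Lie algebra by the four elements L_1, L_2, W_1, W_2. -/
/-- The `W`-algebra `W(2,2)`: a complex Lie algebra with basis
`{L n, W n : n ∈ ℤ} ∪ {z}` (indexed by `(Bool × ℤ) ⊕ Unit`, where `(true, n)` corresponds
to `L n`, `(false, n)` to `W n` and `Sum.inr ()` to `z`) and brackets
`[L n, L m] = (m-n)•L (n+m) + ((n³-n)/12)δ_{n+m,0}•z`,
`[L n, W m] = (m-n)•W (n+m) + ((n³-n)/12)δ_{n+m,0}•z`,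
`[W n, W m] = [z, L m] = [z, W m] = 0`. -/
structure W22 where
  carrier : Type
  [isLieRing : LieRing carrier]
  [isLieAlgebra : LieAlgebra ℂ carrier]
  L : ℤ → carrier
  W : ℤ → carrier
  z : carrier
  basis : Module.Basis ((Bool × ℤ) ⊕ Unit) ℂ carrier
  basis_eq : ∀ i, basis i = Sum.elim (fun p => if p.1 then L p.2 else W p.2) (fun _ => z) i
  bracket_LL : ∀ n m : ℤ, ⁅L n, L m⁆ =
    ((m : ℂ) - n) • L (n + m) + (if n + m = 0 then (((n : ℂ) ^ 3 - n) / 12) else 0) • z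
  bracket_LW : ∀ n m : ℤ, ⁅L n, W m⁆ =
    ((m : ℂ) - n) • W (n + m) + (if n + m = 0 then (((n : ℂ) ^ 3 - n) / 12) else 0) • z
  bracket_WW : ∀ n m : ℤ, ⁅W n, W m⁆ = 0
  bracket_zL : ∀ m : ℤ, ⁅z, L m⁆ = 0
  bracket_zW : ∀ m : ℤ, ⁅z, W m⁆ = 0

attribute [instance] W22.isLieRing W22.isLieAlgebra

/-!
All brackets of `L n, W n` with `n ≥ 1` have positive total degree, so the central term never
appears and `W_+` is spanned by a set closed under brackets up to scalars; hence `W_+` is a Lie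
subalgebra. Conversely `⁅L 1, L n⁆ = (n - 1) • L (n + 1)` and `⁅L 1, W n⁆ = (n - 1) • W (n + 1)`
with `n - 1 ≠ 0` for `n ≥ 2`, so starting from `L 2, W 2` the element `L 1` produces every
`L n, W n` with `n ≥ 2`.
-/

namespace LieSubalgebra

variable {R L : Type*} [CommRing R] [LieRing L] [LieAlgebra R L]

open Submodule in
theorem lie_mem_span_of_forall_lie_mem_span {s : Set L}
    (hs : ∀ᵉ (x ∈ s) (y ∈ s), ⁅x, y⁆ ∈ span R s) {x y : L}
    (hx : x ∈ span R s) (hy : y ∈ span R s) : ⁅x, y⁆ ∈ span R s := by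
  induction hx, hy using span_induction₂ with
  | mem_mem x y hx hy => exact hs x hx y hy
  | zero_left y hy => simp
  | zero_right x hx => simp
  | add_left x y z _ _ _ hx hy => simpa [add_lie] using add_mem hx hy
  | add_right x y z _ _ _ hx hy => simpa [lie_add] using add_mem hx hy
  | smul_left r x y _ _ h => simpa [smul_lie] using smul_mem _ r h
  | smul_right r x y _ _ h => simpa [lie_smul] using smul_mem _ r h

open Submodule in
theorem coe_lieSpan_eq_span_of_forall_lie_mem_span {s : Set L}
    (hs : ∀ᵉ (x ∈ s) (y ∈ s), ⁅x, y⁆ ∈ span R s) :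
    (lieSpan R L s).toSubmodule = span R s := by
  let K : LieSubalgebra R L :=
    { span R s with lie_mem' := lie_mem_span_of_forall_lie_mem_span hs }
  refine le_antisymm ?_ submodule_span_le_lieSpan
  change lieSpan R L s ≤ K
  exact lieSpan_le.mpr subset_span

theorem mem_of_lie_eq_smul {k : Type*} [Field k] [LieAlgebra k L] {A : LieSubalgebra k L}
    {x y v : L} (hx : x ∈ A) (hy : y ∈ A) {c : k} (hxy : ⁅x, y⁆ = c • v) (hc : c ≠ 0) :
    v ∈ A := by
  rw [← mem_toSubmodule, ← Submodule.smul_mem_iff _ hc, ← hxy]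
  exact A.lie_mem hx hy

end LieSubalgebra

namespace W22

variable (g : W22)

theorem lie_L_L_of_add_ne_zero {n m : ℤ} (h : n + m ≠ 0) :
    ⁅g.L n, g.L m⁆ = ((m : ℂ) - n) • g.L (n + m) := by
  rw [g.bracket_LL, if_neg h, zero_smul, add_zero]

theorem lie_L_W_of_add_ne_zero {n m : ℤ} (h : n + m ≠ 0) :
    ⁅g.L n, g.W m⁆ = ((m : ℂ) - n) • g.W (n + m) := by
  rw [g.bracket_LW, if_neg h, zero_smul, add_zero]

def positiveBasis : Set g.carrier := {v | ∃ n : ℤ, 1 ≤ n ∧ (v = g.L n ∨ v = g.W n)}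

theorem L_mem_positiveBasis {n : ℤ} (hn : 1 ≤ n) : g.L n ∈ g.positiveBasis :=
  ⟨n, hn, Or.inl rfl⟩

theorem W_mem_positiveBasis {n : ℤ} (hn : 1 ≤ n) : g.W n ∈ g.positiveBasis :=
  ⟨n, hn, Or.inr rfl⟩

theorem lie_mem_span_positiveBasis {x y : g.carrier} (hx : x ∈ g.positiveBasis)
    (hy : y ∈ g.positiveBasis) : ⁅x, y⁆ ∈ Submodule.span ℂ g.positiveBasis := by
  obtain ⟨n, hn, rfl | rfl⟩ := hx <;> obtain ⟨m, hm, rfl | rfl⟩ := hy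
  · rw [g.lie_L_L_of_add_ne_zero (by omega)]
    exact Submodule.smul_mem _ _ (Submodule.subset_span (g.L_mem_positiveBasis (by omega)))
  · rw [g.lie_L_W_of_add_ne_zero (by omega)]
    exact Submodule.smul_mem _ _ (Submodule.subset_span (g.W_mem_positiveBasis (by omega)))
  · rw [← lie_skew, g.lie_L_W_of_add_ne_zero (by omega)]
    exact Submodule.neg_mem _
      (Submodule.smul_mem _ _ (Submodule.subset_span (g.W_mem_positiveBasis (by omega))))
  · rw [g.bracket_WW]
    exact Submodule.zero_mem _

theorem L_add_one_mem {K : LieSubalgebra ℂ g.carrier} (h1 : g.L 1 ∈ K) {n : ℤ} (hn : 2 ≤ n)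
    (h : g.L n ∈ K) : g.L (n + 1) ∈ K := by
  refine K.mem_of_lie_eq_smul h1 h (c := (n : ℂ) - 1) ?_ ?_
  · rw [g.lie_L_L_of_add_ne_zero (by omega), add_comm, Int.cast_one]
  · exact sub_ne_zero.mpr (by exact_mod_cast (by omega : n ≠ 1))

theorem W_add_one_mem {K : LieSubalgebra ℂ g.carrier} (h1 : g.L 1 ∈ K) {n : ℤ} (hn : 2 ≤ n)
    (h : g.W n ∈ K) : g.W (n + 1) ∈ K := by
  refine K.mem_of_lie_eq_smul h1 h (c := (n : ℂ) - 1) ?_ ?_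
  · rw [g.lie_L_W_of_add_ne_zero (by omega), add_comm, Int.cast_one]
  · exact sub_ne_zero.mpr (by exact_mod_cast (by omega : n ≠ 1))

theorem positiveBasis_subset {K : LieSubalgebra ℂ g.carrier} (hL1 : g.L 1 ∈ K)
    (hL2 : g.L 2 ∈ K) (hW1 : g.W 1 ∈ K) (hW2 : g.W 2 ∈ K) : g.positiveBasis ⊆ K := by
  have hge2 : ∀ n : ℤ, 2 ≤ n → g.L n ∈ K ∧ g.W n ∈ K := by
    intro n hn
    induction n, hn using Int.leInduction with
    | base => exact ⟨hL2, hW2⟩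
    | succ n hn ih => exact ⟨g.L_add_one_mem hL1 hn ih.1, g.W_add_one_mem hL1 hn ih.2⟩
  rintro v ⟨n, hn, rfl | rfl⟩ <;> obtain rfl | hn := hn.eq_or_lt
  exacts [hL1, (hge2 n hn).1, hW1, (hge2 n hn).2]

end W22

/-- The positive part `W_+ = span{L n, W n : n ≥ 1}` of `W(2,2)` is generated as a Lie
algebra by the four elements `L 1, L 2, W 1, W 2`. -/
theorem w22_plus_generated (g : W22) :
    (LieSubalgebra.lieSpan ℂ g.carrier {g.L 1, g.L 2, g.W 1, g.W 2}).toSubmodule =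
      Submodule.span ℂ {v | ∃ n : ℤ, 1 ≤ n ∧ (v = g.L n ∨ v = g.W n)} := by
  have hgen : LieSubalgebra.lieSpan ℂ g.carrier {g.L 1, g.L 2, g.W 1, g.W 2} =
      LieSubalgebra.lieSpan ℂ g.carrier g.positiveBasis := by
    refine le_antisymm (LieSubalgebra.lieSpan_mono ?_) (LieSubalgebra.lieSpan_le.mpr ?_)
    · rintro v (rfl | rfl | rfl | rfl)
      exacts [g.L_mem_positiveBasis le_rfl, g.L_mem_positiveBasis one_le_two,
        g.W_mem_positiveBasis le_rfl, g.W_mem_positiveBasis one_le_two]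
    · exact g.positiveBasis_subset (LieSubalgebra.subset_lieSpan (by simp))
        (LieSubalgebra.subset_lieSpan (by simp)) (LieSubalgebra.subset_lieSpan (by simp))
        (LieSubalgebra.subset_lieSpan (by simp))
  rw [hgen]
  exact LieSubalgebra.coe_lieSpan_eq_span_of_forall_lie_mem_span
    fun _ hx _ hy => g.lie_mem_span_positiveBasis hx hy
end

section
/- Every nonzero submodule of the universal Whittaker module M_φ for W(2,2) contains a nonzero Whittaker vector. -/
attribute [local instance 100] LieRing.ofAssociativeRing

/-- The positive part `W_+` of `W(2,2)`, the Lie subalgebra spanned by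
`{L n, W n : n ≥ 1}`. -/
noncomputable def W22.Wplus (g : W22) : LieSubalgebra ℂ g.carrier :=
  LieSubalgebra.lieSpan ℂ g.carrier {v | ∃ n : ℤ, 1 ≤ n ∧ (v = g.L n ∨ v = g.W n)}

lemma W22.L_mem_Wplus (g : W22) {n : ℤ} (h : 1 ≤ n) : g.L n ∈ g.Wplus :=
  LieSubalgebra.subset_lieSpan ⟨n, h, Or.inl rfl⟩

lemma W22.W_mem_Wplus (g : W22) {n : ℤ} (h : 1 ≤ n) : g.W n ∈ g.Wplus :=
  LieSubalgebra.subset_lieSpan ⟨n, h, Or.inr rfl⟩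

/-- A Lie algebra homomorphism `φ : W_+ → ℂ` is *nonsingular* if
`φ(L 1) φ(L 2) φ(W 1) φ(W 2) ≠ 0`. -/
noncomputable def W22.Nonsingular (g : W22) (φ : g.Wplus →ₗ⁅ℂ⁆ ℂ) : Prop :=
  φ ⟨g.L 1, g.L_mem_Wplus le_rfl⟩ * φ ⟨g.L 2, g.L_mem_Wplus one_le_two⟩ *
    φ ⟨g.W 1, g.W_mem_Wplus le_rfl⟩ * φ ⟨g.W 2, g.W_mem_Wplus one_le_two⟩ ≠ 0

/-- A vector `v` in a `W(2,2)`-module is a *Whittaker vector* of type `φ` if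
`x • v = φ(x) v` for all `x ∈ W_+`. -/
def W22.IsWhittakerVector (g : W22) (φ : g.Wplus →ₗ⁅ℂ⁆ ℂ) {M : Type}
    [AddCommGroup M] [Module ℂ M] [LieRingModule g.carrier M] [LieModule ℂ g.carrier M]
    (v : M) : Prop :=
  ∀ x : g.Wplus, ⁅(x : g.carrier), v⁆ = φ x • v

/-- The successive action of a list of Lie algebra elements on a module vector:
`act [x₁, …, x_r] v = x₁ ⋯ x_r • v`. -/
def W22.act (g : W22) {M : Type} [AddCommGroup M] [Module ℂ M]
    [LieRingModule g.carrier M] [LieModule ℂ g.carrier M]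
    (l : List g.carrier) (v : M) : M :=
  l.foldr (fun x u => ⁅x, u⁆) v

/-- The action of a polynomial `p(z)` in the central element `z` on a module vector. -/
noncomputable def W22.polyAct (g : W22) {M : Type} [AddCommGroup M] [Module ℂ M]
    [LieRingModule g.carrier M] [LieModule ℂ g.carrier M]
    (p : Polynomial ℂ) (v : M) : M :=
  p.sum fun n a => a • ((fun u => ⁅g.z, u⁆)^[n] v)

/-- `M` with cyclic Whittaker vector `w` is *the* universal Whittaker module `M_φ` of
type `φ`: `w` is a cyclic Whittaker vector and for every module `V` with a Whittaker
vector `v` of type `φ` there is a unique `W(2,2)`-module homomorphism `M → V`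
sending `w` to `v`. -/
structure W22.IsUniversalWhittaker (g : W22) (φ : g.Wplus →ₗ⁅ℂ⁆ ℂ) (M : Type)
    [AddCommGroup M] [Module ℂ M] [LieRingModule g.carrier M] [LieModule ℂ g.carrier M]
    (w : M) : Prop where
  whittaker : g.IsWhittakerVector φ w
  cyclic : LieSubmodule.lieSpan ℂ g.carrier {w} = ⊤
  universal : ∀ (V : Type) [AddCommGroup V] [Module ℂ V] [LieRingModule g.carrier V]
      [LieModule ℂ g.carrier V] (v : V), g.IsWhittakerVector φ v →
      ∃! f : M →ₗ⁅ℂ,g.carrier⁆ V, f w = v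

/-!
Filter `M` by the spans `F_d` of the monomials `y₁ ⋯ y_k • w` in the generators `L n`, `W n`
(`n ≤ 0`) and `z`, of total weight at most `d`. Because `w` is a cyclic Whittaker vector, the
filtration exhausts `M`, vanishes in negative degrees, and for every positive generator `x` the
operator `x - φ(x)` maps `F_d` into `F_{d-1}`. Starting from a nonzero `u ∈ N ∩ F_d` and applying
such operators as long as the result stays nonzero, we stop after at most `d + 1` steps at a
nonzero vector of `N` killed by every `x - φ(x)`, which is a Whittaker vector.
-/

open LieModule Set

theorem exists_mem_ne_zero_forall_eq_zero_of_mapsTo {ι M : Type*} [Zero M] {T : ι → M → M}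
    {F : ℤ → Set M} {N : Set M} (hF : ∀ d < 0, F d ⊆ {0})
    (hT : ∀ i d, MapsTo (T i) (F d) (F (d - 1))) (hN : ∀ i, MapsTo (T i) N N)
    {u : M} {d : ℤ} (huN : u ∈ N) (hu : u ≠ 0) (hud : u ∈ F d) :
    ∃ v ∈ N, v ≠ 0 ∧ ∀ i, T i v = 0 := by
  obtain ⟨n, hn⟩ : ∃ n : ℕ, d < n := ⟨d.toNat + 1, by omega⟩
  induction n generalizing u d with
  | zero => exact absurd (hF d (by omega) hud) hu
  | succ n ih =>
    by_cases h : ∀ i, T i u = 0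
    · exact ⟨u, huN, hu, h⟩
    obtain ⟨i, hi⟩ := not_forall.mp h
    exact ih (hN i huN) hi (hT i d hud) (by omega)

namespace W22

abbrev Index := (Bool × ℤ) ⊕ Unit

variable (g : W22)

def gen (p : Bool × ℤ) : g.carrier := if p.1 then g.L p.2 else g.W p.2

lemma basis_inl (p : Bool × ℤ) : g.basis (.inl p) = g.gen p := g.basis_eq _

lemma basis_inr (u : Unit) : g.basis (.inr u) = g.z := g.basis_eq _

variable {g}

lemma gen_mem_Wplus {p : Bool × ℤ} (hp : 1 ≤ p.2) : g.gen p ∈ g.Wplus := by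
  rcases p with ⟨_ | _, n⟩
  · exact g.W_mem_Wplus hp
  · exact g.L_mem_Wplus hp

lemma lie_gen_gen (b b' : Bool) (n k : ℤ) :
    ∃ α β : ℂ, ⁅g.gen (b, n), g.gen (b', k)⁆ = α • g.gen (b && b', n + k) + β • g.z := by
  cases b <;> cases b' <;> simp only [gen, Bool.false_and, Bool.true_and, Bool.false_eq_true,
    if_false, if_true]
  · exact ⟨0, 0, by simp [g.bracket_WW]⟩
  · refine ⟨(k : ℂ) - n, -(if k + n = 0 then ((k : ℂ) ^ 3 - k) / 12 else 0), ?_⟩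
    rw [← lie_skew, g.bracket_LW, add_comm k n]
    module
  · exact ⟨_, _, g.bracket_LW n k⟩
  · exact ⟨_, _, g.bracket_LL n k⟩

lemma gen_lie_z (p : Bool × ℤ) : ⁅g.gen p, g.z⁆ = 0 := by
  rw [← lie_skew, neg_eq_zero]
  rcases p with ⟨_ | _, n⟩
  · exact g.bracket_zW n
  · exact g.bracket_zL n

variable {M : Type} [AddCommGroup M] [Module ℂ M] [LieRingModule g.carrier M]
  [LieModule ℂ g.carrier M]

noncomputable def twist (φ : g.Wplus →ₗ⁅ℂ⁆ ℂ) (x : g.Wplus) : Module.End ℂ M :=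
  toEnd ℂ g.carrier M x - φ x • 1

lemma twist_apply (φ : g.Wplus →ₗ⁅ℂ⁆ ℂ) (x : g.Wplus) (v : M) :
    twist φ x v = ⁅(x : g.carrier), v⁆ - φ x • v := rfl

lemma isWhittakerVector_of_twist_gen_eq_zero {φ : g.Wplus →ₗ⁅ℂ⁆ ℂ} {v : M}
    (h : ∀ p (hp : 1 ≤ p.2), twist φ ⟨g.gen p, gen_mem_Wplus hp⟩ v = 0) :
    g.IsWhittakerVector φ v := by
  rintro ⟨x, hx⟩
  induction hx using LieSubalgebra.lieSpan_induction with
  | mem x hx =>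
    obtain ⟨n, hn, rfl | rfl⟩ := hx
    · exact sub_eq_zero.mp (h (true, n) hn)
    · exact sub_eq_zero.mp (h (false, n) hn)
  | zero =>
    rw [zero_lie, ← zero_smul ℂ v, ← map_zero φ]
    rfl
  | add x y hx hy ihx ihy =>
    rw [add_lie, ihx, ihy, ← add_smul, ← map_add]
    rfl
  | smul a x hx ih =>
    rw [smul_lie, ih, smul_smul, ← smul_eq_mul, ← map_smul]
    rfl
  | lie x y hx hy ihx ihy =>
    have hφ : φ ⟨⁅x, y⁆, g.Wplus.lie_mem hx hy⟩ = 0 :=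
      (φ.map_lie ⟨x, hx⟩ ⟨y, hy⟩).trans (by rw [Ring.lie_def, mul_comm, sub_self])
    rw [hφ, zero_smul, lie_lie, ihx, ihy, lie_smul, lie_smul, ihx, ihy, smul_smul, smul_smul,
      mul_comm, sub_self]

lemma twist_lie (φ : g.Wplus →ₗ⁅ℂ⁆ ℂ) (x : g.Wplus) (y : g.carrier) (v : M) :
    twist φ x ⁅y, v⁆ = ⁅y, twist φ x v⁆ + ⁅⁅(x : g.carrier), y⁆, v⁆ := by
  rw [twist_apply, twist_apply, lie_sub, lie_smul, leibniz_lie]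
  abel

lemma lie_mem_of_twist_mem {φ : g.Wplus →ₗ⁅ℂ⁆ ℂ} {P : Submodule ℂ M} {x : g.Wplus} {v : M}
    (hx : twist φ x v ∈ P) (hv : v ∈ P) : ⁅(x : g.carrier), v⁆ ∈ P := by
  simpa only [twist_apply, sub_add_cancel] using add_mem hx (P.smul_mem (φ x) hv)

-- `L n`, `W n` get weight `1 - n` rather than their degree `-n`: the extra `1` is what the
-- commutator term `⁅⁅x, y⁆, m⁆` in `twist x ⁅y, m⁆` consumes, so that `twist` lowers the weight.
def Index.weight : Index → ℤ := Sum.elim (fun p => 1 - p.2) (fun _ => 0)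

def Index.IsNonpos : Index → Prop := Sum.elim (fun p => p.2 ≤ 0) (fun _ => True)

def wordWeight (l : List Index) : ℤ := (l.map Index.weight).sum

lemma wordWeight_cons (i : Index) (l : List Index) :
    wordWeight (i :: l) = i.weight + wordWeight l := List.sum_cons

lemma Index.weight_nonneg {i : Index} (hi : i.IsNonpos) : 0 ≤ i.weight := by
  rcases i with p | _
  · exact sub_nonneg.mpr (hi.trans zero_le_one)
  · exact le_rfl

lemma wordWeight_nonneg {l : List Index} (hl : ∀ i ∈ l, i.IsNonpos) : 0 ≤ wordWeight l :=
  List.sum_nonneg fun _ ha =>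
    let ⟨i, hi, hw⟩ := List.mem_map.mp ha
    hw ▸ Index.weight_nonneg (hl i hi)

variable (g) in
noncomputable def filtration (w : M) (d : ℤ) : Submodule ℂ M :=
  Submodule.span ℂ
    {v | ∃ l : List Index, (∀ i ∈ l, i.IsNonpos) ∧ wordWeight l ≤ d ∧ g.act (l.map g.basis) w = v}

variable {w : M}

lemma act_mem_filtration {l : List Index} {d : ℤ} (hl : ∀ i ∈ l, i.IsNonpos)
    (hd : wordWeight l ≤ d) : g.act (l.map g.basis) w ∈ g.filtration w d :=
  Submodule.subset_span ⟨l, hl, hd, rfl⟩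

lemma filtration_mono : Monotone (g.filtration w) := fun _ _ hde =>
  Submodule.span_mono fun _ ⟨l, hl, hd, hv⟩ => ⟨l, hl, hd.trans hde, hv⟩

lemma filtration_eq_bot {d : ℤ} (hd : d < 0) : g.filtration w d = ⊥ := by
  refine (Submodule.span_eq_bot).mpr ?_
  rintro _ ⟨l, hl, hld, rfl⟩
  exact absurd ((wordWeight_nonneg hl).trans hld) (by omega)

lemma filtration_le_comap {f : Module.End ℂ M} {d : ℤ} {P : Submodule ℂ M}
    (h : ∀ l : List Index, (∀ i ∈ l, i.IsNonpos) → wordWeight l ≤ d →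
      f (g.act (l.map g.basis) w) ∈ P) :
    g.filtration w d ≤ P.comap f :=
  Submodule.span_le.mpr fun _ ⟨l, hl, hd, hv⟩ => hv ▸ h l hl hd

lemma lie_basis_mem_filtration {i : Index} (hi : i.IsNonpos) {d : ℤ} {v : M}
    (hv : v ∈ g.filtration w d) : ⁅g.basis i, v⁆ ∈ g.filtration w (d + i.weight) :=
  filtration_le_comap (f := toEnd ℂ g.carrier M (g.basis i)) (fun l hl hd =>
    act_mem_filtration (l := i :: l) (List.forall_mem_cons.mpr ⟨hi, hl⟩)
      (by rw [wordWeight_cons]; omega)) hv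

variable {φ : g.Wplus →ₗ⁅ℂ⁆ ℂ}

lemma twist_act_mem_filtration (hw : g.IsWhittakerVector φ w) {l : List Index}
    (hl : ∀ i ∈ l, i.IsNonpos) {q : Bool × ℤ} (hq : 1 ≤ q.2) :
    twist φ ⟨g.gen q, gen_mem_Wplus hq⟩ (g.act (l.map g.basis) w) ∈
      g.filtration w (wordWeight l - 1) := by
  induction l generalizing q with
  | nil =>
    have htw : twist φ ⟨g.gen q, gen_mem_Wplus hq⟩ w = 0 := sub_eq_zero.mpr (hw _)
    exact htw ▸ zero_mem _
  | cons i l ih =>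
    rw [List.forall_mem_cons] at hl
    obtain ⟨hi, hl⟩ := hl
    set m := g.act (l.map g.basis) w
    have hm : m ∈ g.filtration w (wordWeight l) := act_mem_filtration hl le_rfl
    change twist φ _ ⁅g.basis i, m⁆ ∈ _
    rw [twist_lie, wordWeight_cons]
    refine add_mem (filtration_mono (by omega) (lie_basis_mem_filtration hi (ih hl hq))) ?_
    rcases i with ⟨b, k⟩ | u
    · have hk : k ≤ 0 := hi
      obtain ⟨α, β, hαβ⟩ := lie_gen_gen (g := g) q.1 b q.2 k
      have hz : ⁅g.z, m⁆ ∈ g.filtration w (wordWeight l) := by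
        simpa only [basis_inr, Index.weight, Sum.elim_inr, add_zero] using
          lie_basis_mem_filtration (i := .inr ()) trivial hm
      have hr : ⁅g.gen (q.1 && b, q.2 + k), m⁆ ∈ g.filtration w (wordWeight l - k) := by
        by_cases hr : q.2 + k ≤ 0
        · refine filtration_mono ?_ (basis_inl g _ ▸
            lie_basis_mem_filtration (i := .inl (q.1 && b, q.2 + k)) hr hm)
          simp only [Index.weight, Sum.elim_inl]
          omega
        · have hr : 1 ≤ (q.1 && b, q.2 + k).2 := by dsimp only; omega
          exact filtration_mono (by omega) (lie_mem_of_twist_mem (x := ⟨_, gen_mem_Wplus hr⟩)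
            (filtration_mono (by omega) (ih hl hr)) hm)
      rw [basis_inl, hαβ, add_lie, smul_lie, smul_lie]
      simp only [Index.weight, Sum.elim_inl]
      refine add_mem (Submodule.smul_mem _ _ (filtration_mono (by omega) hr))
        (Submodule.smul_mem _ _ (filtration_mono (by omega) hz))
    · rw [basis_inr, gen_lie_z, zero_lie]
      exact zero_mem _

lemma twist_mem_filtration (hw : g.IsWhittakerVector φ w) {q : Bool × ℤ} (hq : 1 ≤ q.2)
    {d : ℤ} {v : M} (hv : v ∈ g.filtration w d) :
    twist φ ⟨g.gen q, gen_mem_Wplus hq⟩ v ∈ g.filtration w (d - 1) :=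
  filtration_le_comap (fun _ hl hd =>
    filtration_mono (by omega) (twist_act_mem_filtration hw hl hq)) hv

lemma lie_gen_mem_filtration (hw : g.IsWhittakerVector φ w) {q : Bool × ℤ} (hq : 1 ≤ q.2)
    {d : ℤ} {v : M} (hv : v ∈ g.filtration w d) : ⁅g.gen q, v⁆ ∈ g.filtration w d :=
  lie_mem_of_twist_mem (x := ⟨_, gen_mem_Wplus hq⟩)
    (filtration_mono (by omega) (twist_mem_filtration hw hq hv)) hv

lemma exists_lie_mem_filtration (hw : g.IsWhittakerVector φ w) (x : g.carrier) {d : ℤ}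
    {v : M} (hv : v ∈ g.filtration w d) : ∃ e, ⁅x, v⁆ ∈ g.filtration w e := by
  induction g.basis.mem_span x using Submodule.span_induction with
  | mem _ hx =>
    obtain ⟨p | u, rfl⟩ := hx
    · by_cases hp : p.2 ≤ 0
      · exact ⟨_, lie_basis_mem_filtration (i := .inl p) hp hv⟩
      · exact ⟨d, basis_inl g p ▸ lie_gen_mem_filtration hw (by omega) hv⟩
    · exact ⟨_, lie_basis_mem_filtration (i := .inr u) trivial hv⟩
  | zero => exact ⟨d, (zero_lie (L := g.carrier) v).symm ▸ zero_mem _⟩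
  | add x y _ _ hx hy =>
    obtain ⟨e, he⟩ := hx
    obtain ⟨e', he'⟩ := hy
    rw [add_lie]
    exact ⟨max e e', add_mem (filtration_mono (le_max_left _ _) he)
      (filtration_mono (le_max_right _ _) he')⟩
  | smul a x _ hx =>
    obtain ⟨e, he⟩ := hx
    rw [smul_lie]
    exact ⟨e, Submodule.smul_mem _ a he⟩

lemma exists_mem_filtration (hw : g.IsWhittakerVector φ w)
    (hc : LieSubmodule.lieSpan ℂ g.carrier {w} = ⊤) (v : M) : ∃ d, v ∈ g.filtration w d := by
  have hv : v ∈ LieSubmodule.lieSpan ℂ g.carrier {w} := hc ▸ LieSubmodule.mem_top v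
  induction hv using LieSubmodule.lieSpan_induction with
  | mem _ hv => exact ⟨0, (mem_singleton_iff.mp hv).symm ▸
      act_mem_filtration (l := []) (List.forall_mem_nil _) le_rfl⟩
  | zero => exact ⟨0, zero_mem _⟩
  | add x y _ _ hx hy =>
    obtain ⟨e, he⟩ := hx
    obtain ⟨e', he'⟩ := hy
    exact ⟨max e e', add_mem (filtration_mono (le_max_left _ _) he)
      (filtration_mono (le_max_right _ _) he')⟩
  | smul a x _ hx =>
    obtain ⟨e, he⟩ := hx
    exact ⟨e, Submodule.smul_mem _ a he⟩
  | lie x _ _ hy =>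
    obtain ⟨d, hd⟩ := hy
    exact exists_lie_mem_filtration hw x hd

end W22

theorem w22_submodule_has_whittaker_vector_general (g : W22) (φ : g.Wplus →ₗ⁅ℂ⁆ ℂ)
    (M : Type) [AddCommGroup M] [Module ℂ M]
    [LieRingModule g.carrier M] [LieModule ℂ g.carrier M] (w : M)
    (hM : g.IsUniversalWhittaker φ M w) :
    ∀ N : LieSubmodule ℂ g.carrier M, N ≠ ⊥ →
      ∃ v : M, v ∈ N ∧ v ≠ 0 ∧ g.IsWhittakerVector φ v := by
  intro N hN
  obtain ⟨u, huN, hu⟩ := (Submodule.ne_bot_iff N.toSubmodule).mp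
    ((LieSubmodule.toSubmodule_eq_bot N).not.mpr hN)
  obtain ⟨d, hd⟩ := W22.exists_mem_filtration hM.whittaker hM.cyclic u
  obtain ⟨v, hvN, hv, htw⟩ := exists_mem_ne_zero_forall_eq_zero_of_mapsTo
    (T := fun q : {q : Bool × ℤ // 1 ≤ q.2} => W22.twist φ ⟨g.gen q, W22.gen_mem_Wplus q.2⟩)
    (F := fun d => g.filtration w d) (N := N)
    (fun d hd => by simp [W22.filtration_eq_bot hd])
    (fun q _ _ hv => W22.twist_mem_filtration hM.whittaker q.2 hv)
    (fun _ _ hv => sub_mem (N.lie_mem hv) (N.smul_mem _ hv))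
    huN hu hd
  exact ⟨v, hvN, hv, W22.isWhittakerVector_of_twist_gen_eq_zero fun p hp => htw ⟨p, hp⟩⟩

/-- Every nonzero submodule of the universal Whittaker module `M_φ` contains a nonzero
Whittaker vector. -/
theorem w22_submodule_has_whittaker_vector (g : W22) (φ : g.Wplus →ₗ⁅ℂ⁆ ℂ)
    (hφ : g.Nonsingular φ) (M : Type) [AddCommGroup M] [Module ℂ M]
    [LieRingModule g.carrier M] [LieModule ℂ g.carrier M] (w : M)
    (hM : g.IsUniversalWhittaker φ M w) :
    ∀ N : LieSubmodule ℂ g.carrier M, N ≠ ⊥ →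
      ∃ v : M, v ∈ N ∧ v ≠ 0 ∧ g.IsWhittakerVector φ v :=
  w22_submodule_has_whittaker_vector_general g φ M w hM
end
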